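/- For every integer k ≥ 3, the complete graph K_k is weakly σ-stable. -/

import Mathlib

open SimpleGraph

/-- The degree of a vertex, defined without decidability assumptions. -/
noncomputable def gdeg {V : Type*} [Fintype V] (G : SimpleGraph V) (v : V) : ℕ :=
  {w | G.Adj v w}.ncard

/-- The multiset of vertex degrees of a finite simple graph. -/
noncomputable def degMultiset {V : Type*} [Fintype V] (G : SimpleGraph V) : Multiset ℕ :=
  Finset.univ.val.map (gdeg G)

/-- A finite sequence of naturals is *graphic* if it is the degree sequence of
a finite simple graph (a *realization*). -/
def IsGraphic (π : List ℕ) : Prop :=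
  ∃ G : SimpleGraph (Fin π.length), degMultiset G = (π : Multiset ℕ)

/-- `H` is contained in `G` as a (not necessarily induced) subgraph. -/
def ContainsSub {V : Type*} {W : Type*} (H : SimpleGraph V) (G : SimpleGraph W) : Prop :=
  ∃ f : V → W, Function.Injective f ∧ ∀ ⦃a b⦄, H.Adj a b → G.Adj (f a) (f b)

/-- `π` is *potentially `H`-graphic*: some realization of `π` contains `H` as a subgraph. -/
def PotentiallyGraphic {V : Type*} (H : SimpleGraph V) (π : List ℕ) : Prop :=
  ∃ G : SimpleGraph (Fin π.length), degMultiset G = (π : Multiset ℕ) ∧ ContainsSub H G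

/-- The potential number `σ(H,n)`: the minimum even integer such that every
(nonincreasing) graphic sequence of length `n` with sum at least that integer is
potentially `H`-graphic. -/
noncomputable def potentialNumber {V : Type*} (H : SimpleGraph V) (n : ℕ) : ℕ :=
  sInf {s : ℕ | Even s ∧ ∀ π : List ℕ, π.length = n → π.Pairwise (· ≥ ·) →
      IsGraphic π → s ≤ π.sum → PotentiallyGraphic H π}

/-- The maximum degree `Δ(G)` of a finite graph. -/
noncomputable def maxDeg {V : Type*} [Fintype V] (G : SimpleGraph V) : ℕ :=
  Finset.univ.sup (gdeg G)

/-- The independence number `α(G)`. -/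
noncomputable def indepNum {V : Type*} [Fintype V] (G : SimpleGraph V) : ℕ :=
  sSup {k | ∃ s : Finset V, s.card = k ∧ (s : Set V).Pairwise fun a b => ¬ G.Adj a b}

/-- `∇_i(H)`: the minimum of `Δ(F)` over induced subgraphs `F` of `H` of order `i`. -/
noncomputable def nabla {V : Type*} [Fintype V] (H : SimpleGraph V) (i : ℕ) : ℕ :=
  sInf {d | ∃ s : Finset V, s.card = i ∧ maxDeg (SimpleGraph.induce (s : Set V) H) = d}

/-- The sequence `π̃_i(H,n) = ((n-1)^{k-i}, (k-i+∇_i(H)-1)^{n-k+i})`, with the last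
term reduced by one if the sum would otherwise be odd. -/
noncomputable def tildePi {V : Type*} [Fintype V] (H : SimpleGraph V) (i n : ℕ) : List ℕ :=
  let k := Fintype.card V
  let d := k - i + nabla H i - 1
  let base := List.replicate (k - i) (n - 1) ++ List.replicate (n - k + i) d
  if Even base.sum then base else base.dropLast ++ [d - 1]

/-- `σ̃_i(H) = 2(k-i) + ∇_i(H) - 1`. -/
noncomputable def sigmaTildeI {V : Type*} [Fintype V] (H : SimpleGraph V) (i : ℕ) : ℕ :=
  2 * (Fintype.card V - i) + nabla H i - 1

/-- `σ̃(H) = max_{α(H)+1 ≤ i ≤ k} σ̃_i(H)`. -/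
noncomputable def sigmaTilde {V : Type*} [Fintype V] (H : SimpleGraph V) : ℕ :=
  (Finset.Icc (_root_.indepNum H + 1) (Fintype.card V)).sup (sigmaTildeI H)

/-- The family `P(H,n)` of extremal nonrealizing sequences. -/
noncomputable def potSet {V : Type*} [Fintype V] (H : SimpleGraph V) (n : ℕ) : Set (List ℕ) :=
  {π | ∃ i ∈ Finset.Icc (_root_.indepNum H + 1) (Fintype.card V),
      sigmaTildeI H i = sigmaTilde H ∧ π = tildePi H i n}

/-- `i*(H)`: the least index `i ∈ {α(H)+1, …, k}` with `σ̃_i(H) = σ̃(H)`. -/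
noncomputable def iStar {V : Type*} [Fintype V] (H : SimpleGraph V) : ℕ :=
  sInf {i | i ∈ Finset.Icc (_root_.indepNum H + 1) (Fintype.card V) ∧ sigmaTildeI H i = sigmaTilde H}

/-- `‖π₁ - π₂‖ = Σ_j |x_j - y_j|`, padding the shorter sequence with zeros. -/
def seqDist (π₁ π₂ : List ℕ) : ℕ :=
  ((List.range (max π₁.length π₂.length)).map fun j =>
    Nat.dist (π₁.getD j 0) (π₂.getD j 0)).sum

/-- `H` is stable with respect to the potential number (σ-stable). -/
def SigmaStable {V : Type*} [Fintype V] (H : SimpleGraph V) : Prop :=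
  ∀ ε : ℝ, 0 < ε → ∃ δ : ℝ, 0 < δ ∧ ∃ n₀ : ℕ, ∀ n : ℕ, n₀ ≤ n →
    ∀ π : List ℕ, π.length = n → π.Pairwise (· ≥ ·) → IsGraphic π →
      ¬ PotentiallyGraphic H π →
      (potentialNumber H n : ℝ) - δ * n ≤ (π.sum : ℝ) →
      ∃ π' ∈ potSet H n, (seqDist π π' : ℝ) < ε * n

/-- The nonincreasing degree sequence of a finite graph. -/
noncomputable def degList {V : Type*} [Fintype V] (G : SimpleGraph V) : List ℕ :=
  ((degMultiset G).sort (· ≤ ·)).reverse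

/-- `π` is degree-sufficient for `H`: termwise, `π` dominates the nonincreasing
degree sequence of `H`. -/
def DegreeSufficient {V : Type*} [Fintype V] (H : SimpleGraph V) (π : List ℕ) : Prop :=
  Fintype.card V ≤ π.length ∧ ∀ i < Fintype.card V, (degList H).getD i 0 ≤ π.getD i 0

/-- `H` is weakly σ-stable. -/
def WeaklySigmaStable {V : Type*} [Fintype V] (H : SimpleGraph V) : Prop :=
  ∀ ε : ℝ, 0 < ε → ∃ δ : ℝ, 0 < δ ∧ ∃ n₀ : ℕ, ∀ n : ℕ, n₀ ≤ n →
    ∀ π : List ℕ, π.length = n → π.Pairwise (· ≥ ·) → IsGraphic π →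
      DegreeSufficient H π →
      ¬ PotentiallyGraphic H π →
      (potentialNumber H n : ℝ) - δ * n ≤ (π.sum : ℝ) →
      ∃ π' ∈ potSet H n, (seqDist π π' : ℝ) < ε * n

/-- The join `G ∨ H` of two graphs on disjoint vertex sets. -/
def graphJoin {V : Type*} {W : Type*} (G : SimpleGraph V) (H : SimpleGraph W) :
    SimpleGraph (V ⊕ W) where
  Adj x y :=
    match x, y with
    | .inl a, .inl b => G.Adj a b
    | .inr a, .inr b => H.Adj a b
    | .inl _, .inr _ => True
    | .inr _, .inl _ => True
  symm := by
    refine ⟨?_⟩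
    rintro (a | a) (b | b) h
    · exact G.adj_symm h
    · trivial
    · trivial
    · exact H.adj_symm h
  loopless := by
    refine ⟨?_⟩
    rintro (a | a) h
    · exact G.loopless.irrefl a h
    · exact H.loopless.irrefl a h

/-- The double star `S_{x,y}`: two adjacent centers (vertices `0` and `1`), with the
first center adjacent to `x` leaves and the second to `y` leaves, so that the centers
have degrees `x+1` and `y+1`. -/
def doubleStar (x y : ℕ) : SimpleGraph (Fin (x + y + 2)) :=
  SimpleGraph.fromRel fun a b =>
    (a.val = 0 ∧ b.val = 1) ∨
    (a.val = 0 ∧ 2 ≤ b.val ∧ b.val < x + 2) ∨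
    (a.val = 1 ∧ x + 2 ≤ b.val)

/-- Laying off the term at (0-based) position `i`: delete it and subtract one from
the `d_i` largest remaining terms. -/
def layOffAt (π : List ℕ) (i : ℕ) : List ℕ :=
  let d := π.getD i 0
  let rest := π.take i ++ π.drop (i + 1)
  (rest.take d).map (· - 1) ++ rest.drop d

/-!
With `δ = 1/4` no sequence satisfies the hypotheses. The extremal sequence
`((n - 1)^{k-2}, (k - 2)^{n-k+2})` is not potentially `K_k`-graphic, so the sum of `π` exceeds
`(2k - 9/2) n`, and every degree-sufficient sequence with such a sum is potentially `K_k`-graphic.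

For the latter, take a realization `G`; the 2-switch `ab, cd ↦ ac, bd` preserves degrees, so it
suffices to create a `k`-clique by switches. Degree thresholds `3k²(j + 1)` have a gap below `k`,
giving a set `S` of fewer than `k` hubs whose degrees exceed all others by more than `2k² + 2k`.
Switches make the hubs pairwise adjacent (failing that, they produce a large complete bipartite
graph, which switches turn into a `k`-clique) and join every vertex of degree at least `k - 1` to
all hubs. It remains to find `k - |S|` pairwise adjacent vertices of degree at least `k - 1`
outside `S`: for `|S| = k - 1` one suffices, for `|S| = k - 2` one switch joins two, and for
`|S| ≤ k - 3` the degree sum forces so many of them that pairwise far apart ones can be chosen and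
linked by independent switches.
-/

namespace PotentialClique

open Finset

open scoped Classical

variable {V : Type*}

section Rewiring

variable [Fintype V]

def Rewiring (X : Set V) (G G' : SimpleGraph V) : Prop :=
  (∀ v, G'.degree v = G.degree v) ∧ ∀ ⦃u v⦄, u ∈ X → v ∈ X → G.Adj u v → G'.Adj u v

namespace Rewiring

variable {X Y : Set V} {G G₁ G₂ : SimpleGraph V}

theorem refl (X : Set V) (G : SimpleGraph V) : Rewiring X G G :=
  ⟨fun _ => rfl, fun _ _ _ _ h => h⟩

theorem trans (h₁ : Rewiring X G G₁) (h₂ : Rewiring X G₁ G₂) : Rewiring X G G₂ :=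
  ⟨fun v => (h₂.1 v).trans (h₁.1 v), fun _ _ hu hv h => h₂.2 hu hv (h₁.2 hu hv h)⟩

theorem mono (h : Rewiring X G G₁) (hYX : Y ⊆ X) : Rewiring Y G G₁ :=
  ⟨h.1, fun _ _ hu hv => h.2 (hYX hu) (hYX hv)⟩

theorem degree_eq (h : Rewiring X G G₁) (v : V) : G₁.degree v = G.degree v := h.1 v

theorem adj (h : Rewiring X G G₁) {u v : V} (hu : u ∈ X) (hv : v ∈ X) (huv : G.Adj u v) :
    G₁.Adj u v :=
  h.2 hu hv huv

end Rewiring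

def PotentiallyHasClique (k : ℕ) (G : SimpleGraph V) : Prop :=
  ∃ G', Rewiring ∅ G G' ∧ ¬ G'.CliqueFree k

theorem Rewiring.potentiallyHasClique {X : Set V} {G G' : SimpleGraph V} {k : ℕ}
    (h : Rewiring X G G') (h' : PotentiallyHasClique k G') : PotentiallyHasClique k G :=
  let ⟨G'', hG'', hclique⟩ := h'
  ⟨G'', (h.mono (Set.empty_subset X)).trans hG'', hclique⟩

theorem potentiallyHasClique_of_isClique {G : SimpleGraph V} {k : ℕ} {s : Finset V}
    (hs : G.IsClique (s : Set V)) (hk : k ≤ s.card) : PotentiallyHasClique k G := by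
  obtain ⟨t, hts, htk⟩ := exists_subset_card_eq hk
  exact ⟨G, Rewiring.refl _ G, fun h => h t ⟨hs.subset (coe_subset.mpr hts), htk⟩⟩

theorem exists_adj_notMem {G : SimpleGraph V} {v : V} {T : Finset V} (h : T.card < G.degree v) :
    ∃ b, G.Adj v b ∧ b ∉ T := by
  obtain ⟨b, hb, hbT⟩ := exists_mem_notMem_of_card_lt_card h
  exact ⟨b, (G.mem_neighborFinset v b).mp hb, hbT⟩

end Rewiring


def switch (G : SimpleGraph V) (a b c d : V) : SimpleGraph V :=
  G.deleteEdges {s(a, b), s(c, d)} ⊔ edge a c ⊔ edge b d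

structure Switchable (G : SimpleGraph V) (a b c d : V) : Prop where
  adj_ab : G.Adj a b
  adj_cd : G.Adj c d
  not_adj_ac : ¬ G.Adj a c
  not_adj_bd : ¬ G.Adj b d
  ne_ac : a ≠ c
  ne_bd : b ≠ d

section Switch

variable {G : SimpleGraph V} {a b c d : V}

theorem switch_adj {x y : V} : (switch G a b c d).Adj x y ↔
    (G.Adj x y ∧ s(x, y) ≠ s(a, b) ∧ s(x, y) ≠ s(c, d)) ∨
      ((s(x, y) = s(a, c) ∨ s(x, y) = s(b, d)) ∧ x ≠ y) := by
  simp only [switch, sup_adj, deleteEdges_adj, edge_adj, Set.mem_insert_iff,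
    Set.mem_singleton_iff, ← Sym2.eq_iff]
  tauto

theorem switch_comm_left (G : SimpleGraph V) (a b c d : V) :
    switch G a b c d = switch G b a d c := by
  have hba : s(b, a) = s(a, b) := Sym2.eq_swap
  have hdc : s(d, c) = s(c, d) := Sym2.eq_swap
  ext x y
  simp only [switch_adj, hba, hdc]
  tauto

theorem switch_comm_right (G : SimpleGraph V) (a b c d : V) :
    switch G a b c d = switch G c d a b := by
  have hca : s(c, a) = s(a, c) := Sym2.eq_swap
  have hdb : s(d, b) = s(b, d) := Sym2.eq_swap
  ext x y
  simp only [switch_adj, hca, hdb]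
  tauto

theorem adj_of_switch_adj {x y : V} (hxy : (switch G a b c d).Adj x y) :
    G.Adj x y ∨ s(x, y) = s(a, c) ∨ s(x, y) = s(b, d) := by
  rcases switch_adj.mp hxy with ⟨h, -⟩ | ⟨h, -⟩ <;> tauto

theorem switch_adj_of_adj {x y : V} (hxy : G.Adj x y) (hab : s(x, y) ≠ s(a, b))
    (hcd : s(x, y) ≠ s(c, d)) : (switch G a b c d).Adj x y :=
  switch_adj.mpr (Or.inl ⟨hxy, hab, hcd⟩)

namespace Switchable

variable (h : Switchable G a b c d)
include h

theorem swap_left : Switchable G b a d c :=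
  ⟨h.adj_ab.symm, h.adj_cd.symm, h.not_adj_bd, h.not_adj_ac, h.ne_bd, h.ne_ac⟩

theorem swap_right : Switchable G c d a b :=
  ⟨h.adj_cd, h.adj_ab, fun h' => h.not_adj_ac h'.symm, fun h' => h.not_adj_bd h'.symm,
    h.ne_ac.symm, h.ne_bd.symm⟩

theorem adj_ac : (switch G a b c d).Adj a c :=
  switch_adj.mpr (Or.inr ⟨Or.inl rfl, h.ne_ac⟩)

theorem adj_bd : (switch G a b c d).Adj b d :=
  switch_adj.mpr (Or.inr ⟨Or.inr rfl, h.ne_bd⟩)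

theorem ne_ad : a ≠ d := by rintro rfl; exact h.not_adj_ac h.adj_cd.symm

theorem ne_bc : b ≠ c := by rintro rfl; exact h.not_adj_bd h.adj_cd

theorem not_adj_ab : ¬ (switch G a b c d).Adj a b := by
  rw [switch_adj]
  rintro (⟨-, hab, -⟩ | ⟨hac | hbd, -⟩)
  · exact hab rfl
  · rcases Sym2.eq_iff.mp hac with ⟨-, rfl⟩ | ⟨rfl, -⟩
    · exact h.ne_bc rfl
    · exact h.ne_ac rfl
  · rcases Sym2.eq_iff.mp hbd with ⟨rfl, -⟩ | ⟨rfl, -⟩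
    · exact h.adj_ab.ne rfl
    · exact h.ne_ad rfl

theorem not_adj_cd : ¬ (switch G a b c d).Adj c d := by
  rw [switch_comm_right]; exact h.swap_right.not_adj_ab

variable [Fintype V]

theorem neighborFinset_switch :
    (switch G a b c d).neighborFinset a = insert c ((G.neighborFinset a).erase b) := by
  have hab := h.adj_ab.ne
  have hac := h.ne_ac
  have had := h.ne_ad
  ext x
  simp only [mem_neighborFinset, mem_insert, mem_erase, switch_adj, ne_eq, Sym2.eq_iff, hab, hac,
    had, true_and, false_and, or_false, not_false_eq_true, and_true]
  constructor
  · rintro (⟨hx, hxb⟩ | ⟨rfl, -⟩)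
    · exact Or.inr ⟨hxb, hx⟩
    · exact Or.inl rfl
  · rintro (rfl | ⟨hxb, hx⟩)
    · exact Or.inr ⟨rfl, hac⟩
    · exact Or.inl ⟨hx, hxb⟩

theorem degree_switch_left : (switch G a b c d).degree a = G.degree a := by
  have hb : b ∈ G.neighborFinset a := (G.mem_neighborFinset a b).mpr h.adj_ab
  have hpos : 0 < G.degree a := card_pos.mpr ⟨b, hb⟩
  rw [← card_neighborFinset_eq_degree, h.neighborFinset_switch,
    card_insert_of_notMem (fun hc => h.not_adj_ac ((G.mem_neighborFinset a c).mp
      (mem_of_mem_erase hc))),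
    card_erase_of_mem hb, card_neighborFinset_eq_degree]
  omega

theorem degree_switch (v : V) : (switch G a b c d).degree v = G.degree v := by
  by_cases hva : v = a
  · exact hva ▸ h.degree_switch_left
  by_cases hvb : v = b
  · rw [switch_comm_left]; exact hvb ▸ h.swap_left.degree_switch_left
  by_cases hvc : v = c
  · rw [switch_comm_right]; exact hvc ▸ h.swap_right.degree_switch_left
  by_cases hvd : v = d
  · rw [switch_comm_right, switch_comm_left]
    exact hvd ▸ h.swap_right.swap_left.degree_switch_left
  refine congrArg card (Finset.ext fun x => ?_)
  simp [switch_adj, hva, hvb, hvc, hvd]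

theorem rewiring : Rewiring ({b, d}ᶜ : Set V) G (switch G a b c d) := by
  refine ⟨h.degree_switch, fun x y hx hy hxy => switch_adj_of_adj hxy ?_ ?_⟩ <;>
    simp only [Set.mem_compl_iff, Set.mem_insert_iff, Set.mem_singleton_iff, not_or] at hx hy <;>
    simp only [ne_eq, Sym2.eq_iff] <;> tauto

theorem rewiring_of_notMem {X : Set V} (hb : b ∉ X) (hd : d ∉ X) :
    Rewiring X G (switch G a b c d) :=
  h.rewiring.mono fun x hx hx' => by
    simp only [Set.mem_insert_iff, Set.mem_singleton_iff] at hx'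
    rcases hx' with rfl | rfl <;> contradiction

end Switchable

end Switch

section Completion

variable {G G' : SimpleGraph V}

noncomputable def missingPairs (G : SimpleGraph V) (Y W : Finset V) : Finset (V × V) :=
  (Y ×ˢ W).filter fun p => p.1 ≠ p.2 ∧ ¬ G.Adj p.1 p.2

theorem card_missingPairs_lt {Y W : Finset V} {y w : V}
    (hkeep : ∀ y ∈ Y, ∀ w ∈ W, G.Adj y w → G'.Adj y w) (hy : y ∈ Y) (hw : w ∈ W)
    (hyw : y ≠ w) (hnadj : ¬ G.Adj y w) (hadj : G'.Adj y w) :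
    (missingPairs G' Y W).card < (missingPairs G Y W).card := by
  refine card_lt_card ⟨fun p hp => ?_, fun hsub => ?_⟩
  · simp only [missingPairs, mem_filter, mem_product] at hp ⊢
    exact ⟨hp.1, hp.2.1, fun h => hp.2.2 (hkeep _ hp.1.1 _ hp.1.2 h)⟩
  · have hmem : (y, w) ∈ missingPairs G Y W := by simp [missingPairs, hy, hw, hyw, hnadj]
    exact (mem_filter.mp (hsub hmem)).2.2 hadj

variable [Fintype V]

theorem exists_rewiring_forall_adj_of_invariant {X : Set V} {Y W : Finset V}
    (I : SimpleGraph V → Prop) (hY : (Y : Set V) ⊆ X) (hW : (W : Set V) ⊆ X) (hG : I G)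
    (step : ∀ G', Rewiring X G G' → I G' → ∀ y ∈ Y, ∀ w ∈ W, y ≠ w → ¬ G'.Adj y w →
      ∃ G'', Rewiring X G' G'' ∧ I G'' ∧ G''.Adj y w) :
    ∃ G', Rewiring X G G' ∧ ∀ y ∈ Y, ∀ w ∈ W, y ≠ w → G'.Adj y w := by
  induction hm : (missingPairs G Y W).card using Nat.strong_induction_on generalizing G with
  | _ m ih =>
  by_cases hdone : ∀ y ∈ Y, ∀ w ∈ W, y ≠ w → G.Adj y w
  · exact ⟨G, Rewiring.refl X G, hdone⟩
  push Not at hdone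
  obtain ⟨y, hy, w, hw, hyw, hnadj⟩ := hdone
  obtain ⟨G₁, hG₁, hI₁, hadj⟩ := step G (Rewiring.refl X G) hG y hy w hw hyw hnadj
  have hlt := card_missingPairs_lt (fun y' hy' w' hw' => hG₁.adj (hY hy') (hW hw')) hy hw hyw
    hnadj hadj
  obtain ⟨G₂, hG₂, hcomplete⟩ := ih _ (hm ▸ hlt) hI₁ (fun G' h => step G' (hG₁.trans h)) rfl
  exact ⟨G₂, hG₁.trans hG₂, hcomplete⟩

theorem exists_rewiring_forall_adj {X : Set V} {Y W : Finset V} (hY : (Y : Set V) ⊆ X)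
    (hW : (W : Set V) ⊆ X)
    (step : ∀ G', Rewiring X G G' → ∀ y ∈ Y, ∀ w ∈ W, y ≠ w → ¬ G'.Adj y w →
      ∃ G'', Rewiring X G' G'' ∧ G''.Adj y w) :
    ∃ G', Rewiring X G G' ∧ ∀ y ∈ Y, ∀ w ∈ W, y ≠ w → G'.Adj y w :=
  exists_rewiring_forall_adj_of_invariant (fun _ => True) hY hW trivial
    fun G' hG' _ y hy w hw hyw hnadj =>
      let ⟨G'', hG'', hadj⟩ := step G' hG' y hy w hw hyw hnadj
      ⟨G'', hG'', trivial, hadj⟩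

theorem exists_rewiring_adj_of_degree {X : Finset V} {θ : ℕ} {x w : V} (hx : x ∈ X) (hw : w ∈ X)
    (hxw : x ≠ w) (hnadj : ¬ G.Adj x w) (hxdeg : X.card ≤ G.degree x + 1)
    (hwdeg : X.card + θ < G.degree w) (hsmall : ∀ v ∉ X, G.degree v < θ) :
    ∃ G', Rewiring X G G' ∧ G'.Adj x w := by
  obtain ⟨b, hxb, hbT⟩ := exists_adj_notMem (G := G) (v := x) (T := (X.erase x).erase w) (by
    have := one_lt_card.mpr ⟨x, hx, w, hw, hxw⟩
    rw [card_erase_of_mem (mem_erase.mpr ⟨hxw.symm, hw⟩), card_erase_of_mem hx]; omega)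
  have hbX : b ∉ X := fun hbX =>
    hbT (mem_erase.mpr ⟨by rintro rfl; exact hnadj hxb, mem_erase.mpr ⟨hxb.ne.symm, hbX⟩⟩)
  obtain ⟨a, hwa, haT⟩ := exists_adj_notMem (G := G) (v := w)
    (T := X ∪ insert b (G.neighborFinset b)) (by
      have h₁ := hsmall b hbX
      have h₂ : (insert b (G.neighborFinset b)).card ≤ G.degree b + 1 := card_insert_le _ _
      have h₃ := card_union_le X (insert b (G.neighborFinset b))
      omega)
  simp only [mem_union, mem_insert, mem_neighborFinset, not_or] at haT
  have hs : Switchable G x b w a := ⟨hxb, hwa, hnadj, haT.2.2, hxw, Ne.symm haT.2.1⟩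
  exact ⟨_, hs.rewiring_of_notMem hbX haT.1, hs.adj_ac⟩

theorem exists_rewiring_forall_adj_of_degree {X Y W : Finset V} {θ : ℕ} (hY : Y ⊆ X)
    (hW : W ⊆ X) (hYdeg : ∀ y ∈ Y, X.card ≤ G.degree y + 1)
    (hWdeg : ∀ w ∈ W, X.card + θ < G.degree w) (hsmall : ∀ v ∉ X, G.degree v < θ) :
    ∃ G', Rewiring X G G' ∧ ∀ y ∈ Y, ∀ w ∈ W, y ≠ w → G'.Adj y w :=
  exists_rewiring_forall_adj (coe_subset.mpr hY) (coe_subset.mpr hW)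
    fun _ hG' y hy w hw hyw hnadj =>
      exists_rewiring_adj_of_degree (hY hy) (hW hw) hyw hnadj
        (hG'.degree_eq y ▸ hYdeg y hy) (hG'.degree_eq w ▸ hWdeg w hw)
        fun v hv => hG'.degree_eq v ▸ hsmall v hv

end Completion

section CompleteBipartite

variable [Fintype V] {k : ℕ}

/-- Each switch adds an edge inside `C` and spends two vertices of `B`. -/
theorem potentiallyHasClique_of_forall_adj_of_disjoint {C B : Finset V} (hCB : Disjoint C B)
    (hC : C.card = k) (G : SimpleGraph V) (U : Finset V)
    (hsize : U.card + 2 * (missingPairs G C C).card + k ≤ B.card)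
    (hadj : ∀ c ∈ C, ∀ b ∈ B \ U, G.Adj c b) : PotentiallyHasClique k G := by
  induction hm : (missingPairs G C C).card using Nat.strong_induction_on generalizing G U with
  | _ m ih =>
  by_cases hCcl : G.IsClique (C : Set V)
  · exact potentiallyHasClique_of_isClique hCcl hC.ge
  by_cases hBcl : G.IsClique ((B \ U : Finset V) : Set V)
  · exact potentiallyHasClique_of_isClique hBcl (by have := le_card_sdiff U B; omega)
  obtain ⟨c, hc, c', hc', hcc', hnadj⟩ : ∃ c ∈ C, ∃ c' ∈ C, c ≠ c' ∧ ¬ G.Adj c c' := by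
    simpa [IsClique, Set.Pairwise] using hCcl
  obtain ⟨b, hb, hbU, b', hb', hb'U, hbb', hnadj'⟩ :
      ∃ b ∈ B, b ∉ U ∧ ∃ b' ∈ B, b' ∉ U ∧ b ≠ b' ∧ ¬ G.Adj b b' := by
    simpa [IsClique, Set.Pairwise] using hBcl
  have hs : Switchable G c b c' b' := ⟨hadj c hc b (mem_sdiff.mpr ⟨hb, hbU⟩),
    hadj c' hc' b' (mem_sdiff.mpr ⟨hb', hb'U⟩), hnadj, hnadj', hcc', hbb'⟩
  have hkeep : ∀ x, x ∈ C ∨ x ∈ B \ insert b (insert b' U) → x ∈ ({b, b'}ᶜ : Set V) := by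
    rintro x (hx | hx) <;> simp only [Set.mem_compl_iff, Set.mem_insert_iff,
      Set.mem_singleton_iff, not_or]
    · exact ⟨fun h => disjoint_left.mp hCB hx (h ▸ hb), fun h => disjoint_left.mp hCB hx (h ▸ hb')⟩
    · simp only [mem_sdiff, mem_insert, not_or] at hx
      exact ⟨hx.2.1, hx.2.2.1⟩
  have hlt := card_missingPairs_lt (G' := switch G c b c' b')
    (fun x hx y hy => hs.rewiring.adj (hkeep x (Or.inl hx)) (hkeep y (Or.inl hy))) hc hc' hcc'
    hnadj hs.adj_ac
  refine hs.rewiring.potentiallyHasClique (ih _ (hm ▸ hlt) _ (insert b (insert b' U)) ?_ ?_ rfl)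
  · have := card_insert_le b (insert b' U)
    have := card_insert_le b' U
    omega
  · intro x hx y hy
    have hyU : y ∈ B \ U := by
      simp only [mem_sdiff, mem_insert, not_or] at hy ⊢
      exact ⟨hy.1, hy.2.2.2⟩
    exact hs.rewiring.adj (hkeep x (Or.inl hx)) (hkeep y (Or.inr hy)) (hadj x hx y hyU)

theorem potentiallyHasClique_of_forall_adj {A B : Finset V} {G : SimpleGraph V}
    (hA : 2 * k ≤ A.card) (hB : 2 * k * k + k ≤ B.card)
    (hadj : ∀ a ∈ A, ∀ b ∈ B, a ≠ b → G.Adj a b) : PotentiallyHasClique k G := by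
  by_cases hAB : k ≤ (A ∩ B).card
  · refine potentiallyHasClique_of_isClique (s := A ∩ B) (fun a ha b hb hab => ?_) hAB
    exact hadj a (mem_inter.mp ha).1 b (mem_inter.mp hb).2 hab
  obtain ⟨C, hCA, hC⟩ := exists_subset_card_eq (s := A \ B) (n := k) (by
    have := card_sdiff_add_card_inter A B
    omega)
  have hCB : Disjoint C B := disjoint_of_subset_left hCA sdiff_disjoint
  have hmissing : (missingPairs G C C).card ≤ k * k :=
    (card_filter_le _ _).trans (by rw [card_product, hC])
  refine potentiallyHasClique_of_forall_adj_of_disjoint hCB hC G ∅ (by simp; linarith) ?_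
  intro c hc b hb
  have hc' := mem_sdiff.mp (hCA hc)
  exact hadj c hc'.1 b (mem_sdiff.mp hb).1 fun h => hc'.2 (h ▸ (mem_sdiff.mp hb).1)

end CompleteBipartite

section Hubs

variable [Fintype V] {k : ℕ} {G : SimpleGraph V}

theorem exists_rewiring_adj_of_not_potentiallyHasClique {X : Finset V} {u v : V}
    (hG : ¬ PotentiallyHasClique k G) (hX : X.card ≤ k) (huv : u ≠ v) (hnadj : ¬ G.Adj u v)
    (hu : 2 * k * k + 2 * k ≤ G.degree u) (hv : 2 * k * k + 2 * k ≤ G.degree v) :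
    ∃ G', Rewiring X G G' ∧ G'.Adj u v := by
  by_cases hsw : ∃ a ∈ G.neighborFinset u \ X, ∃ b ∈ G.neighborFinset v \ X, a ≠ b ∧ ¬ G.Adj a b
  · obtain ⟨a, ha, b, hb, hab, hnadj'⟩ := hsw
    rw [mem_sdiff, mem_neighborFinset] at ha hb
    have hs : Switchable G u a v b := ⟨ha.1, hb.1, hnadj, hnadj', huv, hab⟩
    exact ⟨_, hs.rewiring_of_notMem ha.2 hb.2, hs.adj_ac⟩
  push Not at hsw
  have hA : G.degree u - X.card ≤ (G.neighborFinset u \ X).card := le_card_sdiff _ _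
  have hB : G.degree v - X.card ≤ (G.neighborFinset v \ X).card := le_card_sdiff _ _
  have : k ≤ 2 * k * k := by nlinarith [Nat.le_mul_self k]
  exact absurd (potentiallyHasClique_of_forall_adj (by omega) (by omega) hsw) hG

theorem exists_rewiring_isClique_of_degree {X B : Finset V} (hG : ¬ PotentiallyHasClique k G)
    (hBX : B ⊆ X) (hX : X.card ≤ k) (hdeg : ∀ v ∈ B, 2 * k * k + 2 * k ≤ G.degree v) :
    ∃ G', Rewiring X G G' ∧ G'.IsClique (B : Set V) := by
  obtain ⟨G', hG', h⟩ := exists_rewiring_forall_adj (coe_subset.mpr hBX) (coe_subset.mpr hBX)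
    fun G' hG' u hu v hv huv hnadj =>
      exists_rewiring_adj_of_not_potentiallyHasClique (fun h => hG (hG'.potentiallyHasClique h))
        hX huv hnadj (hG'.degree_eq u ▸ hdeg u hu) (hG'.degree_eq v ▸ hdeg v hv)
  exact ⟨G', hG', fun u hu v hv huv => h u hu v hv huv⟩

theorem potentiallyHasClique_of_hubs {S Y : Finset V} {θ : ℕ} {G' : SimpleGraph V}
    (hG' : Rewiring ∅ G G') (hY : G'.IsClique (Y : Set V)) (hSY : Disjoint S Y)
    (hcard : S.card + Y.card = k) (hYdeg : ∀ y ∈ Y, k ≤ G.degree y + 1)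
    (hS : ∀ s ∈ S, θ + 2 * k * k + 2 * k < G.degree s) (hsmall : ∀ v ∉ S, G.degree v < θ) :
    PotentiallyHasClique k G := by
  refine hG'.potentiallyHasClique ?_
  simp only [← hG'.degree_eq] at hYdeg hS hsmall
  by_contra hG
  have hX : (S ∪ Y).card = k := by rw [card_union_of_disjoint hSY, hcard]
  obtain ⟨G₁, hG₁, hS₁⟩ := exists_rewiring_isClique_of_degree hG subset_union_left hX.le
    fun s hs => by have := hS s hs; omega
  obtain ⟨G₂, hG₂, hYS⟩ := exists_rewiring_forall_adj_of_degree (G := G₁) (θ := θ)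
    subset_union_right subset_union_left
    (fun y hy => by rw [hX, hG₁.degree_eq]; exact hYdeg y hy)
    (fun s hs => by rw [hX, hG₁.degree_eq]; have := hS s hs; nlinarith)
    (fun v hv => by rw [hG₁.degree_eq]; exact hsmall v fun h => hv (mem_union_left _ h))
  refine hG ((hG₁.trans hG₂).potentiallyHasClique
    (potentiallyHasClique_of_isClique (s := S ∪ Y) ?_ hX.ge))
  intro u hu v hv huv
  have hu' : u ∈ S ∪ Y := hu
  have hv' : v ∈ S ∪ Y := hv
  rcases mem_union.mp hu' with hu | hu <;> rcases mem_union.mp hv' with hv | hv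
  · exact hG₂.adj hu' hv' (hS₁ hu hv huv)
  · exact (hYS v hv u hu (Ne.symm huv)).symm
  · exact hYS u hu v hv huv
  · exact (hG₁.trans hG₂).adj hu' hv' (hY hu hv huv)

end Hubs

section AdjacentPair

variable [Fintype V] {G : SimpleGraph V}

/-- Either `u₁ u₂` can be switched into an edge, or the neighbours of `u₁` are all adjacent to a
neighbour `b` of `u₂`, which then has degree at least that of `u₁`. -/
theorem exists_adj_of_degree {W : Finset V} {d : ℕ} {u₁ u₂ : V} (hu₁ : u₁ ∉ W) (hu₂ : u₂ ∉ W)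
    (hne : u₁ ≠ u₂) (hd₁ : d ≤ G.degree u₁) (hd₂ : d ≤ G.degree u₂) (hW : W.card < G.degree u₂) :
    ∃ G' x y, Rewiring ∅ G G' ∧ G'.Adj x y ∧ x ∉ W ∧ y ∉ W ∧ d ≤ G.degree x ∧ d ≤ G.degree y := by
  by_cases h₁₂ : G.Adj u₁ u₂
  · exact ⟨G, u₁, u₂, Rewiring.refl _ _, h₁₂, hu₁, hu₂, hd₁, hd₂⟩
  obtain ⟨b, hu₂b, hbW⟩ := exists_adj_notMem hW
  by_cases hsw : ∃ a, G.Adj u₁ a ∧ a ≠ b ∧ ¬ G.Adj a b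
  · obtain ⟨a, hu₁a, hab, hnadj⟩ := hsw
    have hs : Switchable G u₁ a u₂ b := ⟨hu₁a, hu₂b, h₁₂, hnadj, hne, hab⟩
    exact ⟨_, u₁, u₂, hs.rewiring.mono (Set.empty_subset _), hs.adj_ac, hu₁, hu₂, hd₁, hd₂⟩
  push Not at hsw
  refine ⟨G, u₂, b, Rewiring.refl _ _, hu₂b, hu₂, hbW, hd₂, hd₁.trans ?_⟩
  have hsub : insert u₂ ((G.neighborFinset u₁).erase b) ⊆ G.neighborFinset b := by
    intro x hx
    rw [mem_insert, mem_erase, mem_neighborFinset] at hx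
    rw [mem_neighborFinset]
    rcases hx with rfl | ⟨hxb, hx⟩
    · exact hu₂b.symm
    · exact (hsw x hx hxb).symm
  have hu₂N : u₂ ∉ (G.neighborFinset u₁).erase b := fun h =>
    h₁₂ ((G.mem_neighborFinset _ _).mp (mem_of_mem_erase h))
  have := card_le_card hsub
  rw [card_insert_of_notMem hu₂N] at this
  have := pred_card_le_card_erase (s := G.neighborFinset u₁) (a := b)
  rw [card_neighborFinset_eq_degree] at *
  omega

end AdjacentPair

section Separation

variable {G : SimpleGraph V} {S : Finset V}

def Separated (G : SimpleGraph V) (S : Finset V) (x y : V) : Prop :=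
  ∀ ⦃b c⦄, G.Adj x b → b ∉ S → G.Adj y c → c ∉ S → b ≠ c ∧ ¬ G.Adj b c

theorem Separated.symm {x y : V} (h : Separated G S x y) : Separated G S y x :=
  fun _ _ hyb hb hxc hc => ⟨(h hxc hc hyb hb).1.symm, fun h' => (h hxc hc hyb hb).2 h'.symm⟩

variable [Fintype V]

noncomputable def nearby (G : SimpleGraph V) (S : Finset V) (x : V) : Finset V :=
  (G.neighborFinset x \ S).biUnion fun b =>
    (insert b (G.neighborFinset b \ S)).biUnion fun c => G.neighborFinset c

theorem separated_of_notMem_nearby {x y : V} (h : y ∉ nearby G S x) : Separated G S x y := by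
  intro b c hxb hb hyc hc
  by_contra hbc
  refine h (mem_biUnion.mpr ⟨b, mem_sdiff.mpr ⟨(G.mem_neighborFinset _ _).mpr hxb, hb⟩,
    mem_biUnion.mpr ⟨c, ?_, (G.mem_neighborFinset _ _).mpr hyc.symm⟩⟩)
  rw [mem_insert, mem_sdiff, mem_neighborFinset]
  by_cases hbc' : b = c
  · exact Or.inl hbc'.symm
  · exact Or.inr ⟨by tauto, hc⟩

theorem card_nearby_le {x : V} {θ : ℕ} (hx : x ∉ S) (hsmall : ∀ v ∉ S, G.degree v < θ) :
    (nearby G S x).card ≤ θ * (θ * θ) := by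
  have hN : ∀ v ∉ S, (G.neighborFinset v \ S).card < θ := fun v hv =>
    (card_le_card sdiff_subset).trans_lt (hsmall v hv)
  refine card_biUnion_le_card_mul _ _ _ (fun b hb => ?_) |>.trans
    (Nat.mul_le_mul_right _ (hN x hx).le)
  have hbS := (mem_sdiff.mp hb).2
  refine card_biUnion_le_card_mul _ _ _ (fun c hc => ?_) |>.trans
    (Nat.mul_le_mul_right _ ((card_insert_le _ _).trans (hN b hbS)))
  rcases mem_insert.mp hc with rfl | hc
  · exact (hsmall c hbS).le
  · exact (hsmall c (mem_sdiff.mp hc).2).le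

theorem exists_separated_subset {θ : ℕ} (hsmall : ∀ v ∉ S, G.degree v < θ) :
    ∀ (q : ℕ) (P : Finset V), Disjoint P S → q * (θ + 1) ^ 3 ≤ P.card →
      ∃ Y ⊆ P, Y.card = q ∧ (Y : Set V).Pairwise (Separated G S)
  | 0, _, _, _ => ⟨∅, empty_subset _, rfl, by simp⟩
  | q + 1, P, hPS, hP => by
    obtain ⟨x, hx⟩ : P.Nonempty := by
      rw [← card_pos]; exact lt_of_lt_of_le (by positivity) hP
    have hxS : x ∉ S := disjoint_left.mp hPS hx
    obtain ⟨Y, hYP, hY, hsep⟩ := exists_separated_subset hsmall q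
      (P \ insert x (nearby G S x)) (disjoint_of_subset_left sdiff_subset hPS) (by
        have h₁ := card_nearby_le hxS hsmall
        have h₂ := le_card_sdiff (insert x (nearby G S x)) P
        have h₃ := card_insert_le x (nearby G S x)
        have h₄ : θ * (θ * θ) + 1 ≤ (θ + 1) ^ 3 := by nlinarith
        rw [add_one_mul] at hP
        omega)
    have hxY : x ∉ Y := fun h => (mem_sdiff.mp (hYP h)).2 (mem_insert_self _ _)
    refine ⟨insert x Y, insert_subset hx (hYP.trans sdiff_subset), by
      rw [card_insert_of_notMem hxY, hY], ?_⟩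
    rw [coe_insert, Set.pairwise_insert]
    refine ⟨hsep, fun y hy _ => ?_⟩
    have hsep' := separated_of_notMem_nearby (G := G) (S := S) (x := x) (y := y)
      fun h => (mem_sdiff.mp (hYP hy)).2 (mem_insert_of_mem h)
    exact ⟨hsep', hsep'.symm⟩

end Separation

section Linking

variable {G₀ G : SimpleGraph V} {S Y U : Finset V}

/-- `U` collects the vertices used by earlier switches while `Y` is being made a clique. -/
structure LinkInvariant (G₀ G : SimpleGraph V) (Y U : Finset V) : Prop where
  disjoint : Disjoint U Y
  adj : ∀ ⦃x y⦄, G.Adj x y → G₀.Adj x y ∨ (x ∈ Y ∧ y ∈ Y) ∨ (x ∈ U ∧ y ∈ U)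
  not_adj : ∀ y ∈ Y, ∀ u ∈ U, ¬ G.Adj y u

theorem LinkInvariant.not_adj_of_adj (hinv : LinkInvariant G₀ G Y U)
    (hsep : (Y : Set V).Pairwise (Separated G₀ S)) {p z w : V} (hp : p ∈ Y) (hz : z ∈ Y)
    (hpz : p ≠ z) (hwS : w ∉ S) (hwY : w ∉ Y) (hzw : G₀.Adj z w) : ¬ G.Adj p w := by
  intro hpw
  rcases hinv.adj hpw with h₀ | ⟨-, hw⟩ | ⟨hpU, -⟩
  · exact (hsep hp hz hpz h₀ hwS hzw hwS).1 rfl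
  · exact hwY hw
  · exact disjoint_left.mp hinv.disjoint hpU hp

theorem LinkInvariant.link (hinv : LinkInvariant G₀ G Y U)
    (hsep : (Y : Set V).Pairwise (Separated G₀ S)) {x x' b c : V} (hs : Switchable G x b x' c)
    (hx : x ∈ Y) (hx' : x' ∈ Y) (hbS : b ∉ S) (hcS : c ∉ S) (hbY : b ∉ Y) (hcY : c ∉ Y)
    (hxb : G₀.Adj x b) (hx'c : G₀.Adj x' c) :
    LinkInvariant G₀ (switch G x b x' c) Y (insert b (insert c U)) := by
  have hU₁ : ∀ u ∈ insert b (insert c U), u = b ∨ u = c ∨ u ∈ U := by simp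
  refine ⟨?_, fun p q hpq => ?_, fun p hp u hu hpu => ?_⟩
  · simpa [hbY, hcY] using hinv.disjoint
  · rcases adj_of_switch_adj hpq with h | h | h
    · rcases hinv.adj h with h | h | h <;> simp [h]
    · rcases Sym2.eq_iff.mp h with ⟨rfl, rfl⟩ | ⟨rfl, rfl⟩ <;> simp [hx, hx']
    · rcases Sym2.eq_iff.mp h with ⟨rfl, rfl⟩ | ⟨rfl, rfl⟩ <;> simp
  rcases adj_of_switch_adj hpu with h | h | h
  · rcases hU₁ u hu with rfl | rfl | hu
    · by_cases hpx : p = x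
      · exact hs.not_adj_ab (hpx ▸ hpu)
      · exact hinv.not_adj_of_adj hsep hp hx hpx hbS hbY hxb h
    · by_cases hpx' : p = x'
      · exact hs.not_adj_cd (hpx' ▸ hpu)
      · exact hinv.not_adj_of_adj hsep hp hx' hpx' hcS hcY hx'c h
    · exact hinv.not_adj p hp u hu h
  · rcases Sym2.eq_iff.mp h with ⟨-, rfl⟩ | ⟨-, rfl⟩ <;> rcases hU₁ u hu with rfl | rfl | hu <;>
      simp_all [disjoint_left.mp hinv.disjoint]
  · rcases Sym2.eq_iff.mp h with ⟨rfl, -⟩ | ⟨rfl, -⟩ <;> contradiction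

variable [Fintype V]

theorem exists_adj_notMem_of_not_adj {y y' : V} (hy : y ∈ Y) (hy' : y' ∈ Y) (hne : y ≠ y')
    (hnadj : ¬ G.Adj y y') (hdeg : S.card + Y.card ≤ G.degree y + 1) :
    ∃ b, G.Adj y b ∧ b ∉ S ∧ b ∉ Y := by
  obtain ⟨b, hyb, hbT⟩ := exists_adj_notMem (G := G) (v := y) (T := S ∪ (Y.erase y).erase y') (by
    have := card_union_le S ((Y.erase y).erase y')
    rw [card_erase_of_mem (mem_erase.mpr ⟨hne.symm, hy'⟩), card_erase_of_mem hy] at this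
    have := one_lt_card.mpr ⟨y, hy, y', hy', hne⟩
    omega)
  simp only [mem_union, mem_erase, not_or, not_and] at hbT
  exact ⟨b, hyb, hbT.1, fun hbY => hbT.2 (by rintro rfl; exact hnadj hyb) hyb.ne.symm hbY⟩

theorem LinkInvariant.exists_switch (hinv : LinkInvariant G₀ G Y U)
    (hsep : (Y : Set V).Pairwise (Separated G₀ S))
    (hdeg : ∀ y ∈ Y, S.card + Y.card ≤ G.degree y + 1) {x x' : V} (hx : x ∈ Y) (hx' : x' ∈ Y)
    (hxx' : x ≠ x') (hnadj : ¬ G.Adj x x') :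
    ∃ b c, Switchable G x b x' c ∧ b ∉ Y ∧ c ∉ Y ∧
      LinkInvariant G₀ (switch G x b x' c) Y (insert b (insert c U)) := by
  obtain ⟨b, hxb, hbS, hbY⟩ := exists_adj_notMem_of_not_adj hx hx' hxx' hnadj (hdeg x hx)
  obtain ⟨c, hx'c, hcS, hcY⟩ :=
    exists_adj_notMem_of_not_adj hx' hx hxx'.symm (fun h => hnadj h.symm) (hdeg x' hx')
  have horig : ∀ {y z}, y ∈ Y → z ∉ Y → G.Adj y z → G₀.Adj y z := fun hy hz hyz => by
    rcases hinv.adj hyz with h | ⟨-, h⟩ | ⟨h, -⟩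
    · exact h
    · exact absurd h hz
    · exact absurd hy (disjoint_left.mp hinv.disjoint h)
  have hxb₀ := horig hx hbY hxb
  have hx'c₀ := horig hx' hcY hx'c
  have hbc := hsep hx hx' hxx' hxb₀ hbS hx'c₀ hcS
  have hnadj' : ¬ G.Adj b c := fun h => by
    rcases hinv.adj h with h | ⟨h, -⟩ | ⟨h, -⟩
    · exact hbc.2 h
    · exact hbY h
    · exact hinv.not_adj x hx b h hxb
  have hs : Switchable G x b x' c := ⟨hxb, hx'c, hnadj, hnadj', hxx', hbc.1⟩
  exact ⟨b, c, hs, hbY, hcY, hinv.link hsep hs hx hx' hbS hcS hbY hcY hxb₀ hx'c₀⟩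

/-- Each missing edge `xx'` is created from edges `xb`, `x'c` that no other vertex of `Y` can
reach, since `Y` is pairwise separated. -/
theorem exists_rewiring_isClique_of_separated
    (hsep : (Y : Set V).Pairwise (Separated G S))
    (hdeg : ∀ y ∈ Y, S.card + Y.card ≤ G.degree y + 1) :
    ∃ G', Rewiring Y G G' ∧ G'.IsClique (Y : Set V) := by
  obtain ⟨G', hG', h⟩ := exists_rewiring_forall_adj_of_invariant
    (fun G' => ∃ U, LinkInvariant G G' Y U) subset_rfl subset_rfl
    ⟨∅, disjoint_empty_left _, fun _ _ h => Or.inl h, by simp⟩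
    fun G' hG' ⟨U, hU⟩ x hx x' hx' hxx' hnadj => by
      obtain ⟨b, c, hs, hb, hc, hinv⟩ := hU.exists_switch hsep
        (fun y hy => hG'.degree_eq y ▸ hdeg y hy) hx hx' hxx' hnadj
      exact ⟨_, hs.rewiring_of_notMem hb hc, ⟨_, hinv⟩, hs.adj_ac⟩
  exact ⟨G', hG', fun u hu v hv huv => h u hu v hv huv⟩

end Linking

theorem exists_eq_of_card_lt {α : Type*} {k : ℕ} {s : ℕ → Finset α} (hs : ∀ j, s (j + 1) ⊆ s j)
    (hk : (s 0).card < k) : ∃ j < k, s (j + 1) = s j := by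
  by_contra h
  push Not at h
  have hdec : ∀ j ≤ k, (s j).card + j ≤ (s 0).card := by
    intro j hj
    induction j with
    | zero => simp
    | succ j ih =>
      have := card_lt_card (ssubset_of_subset_of_ne (hs j) (h j (by omega)))
      have := ih (by omega)
      omega
  have := hdec k le_rfl
  omega

section Core

variable [Fintype V] {k : ℕ} {G : SimpleGraph V}

theorem sum_degree_le {S P : Finset V} {θ d : ℕ} (hSP : Disjoint S P)
    (hP : ∀ v ∈ P, G.degree v < θ) (hrest : ∀ v ∉ S, v ∉ P → G.degree v ≤ d) :
    ∑ v, G.degree v ≤ Fintype.card V * d + S.card * Fintype.card V + P.card * θ := by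
  have hpt : ∀ v, G.degree v ≤
      d + (if v ∈ S then Fintype.card V else 0) + (if v ∈ P then θ else 0) := by
    intro v
    have := G.degree_lt_card_verts v
    by_cases hvS : v ∈ S
    · simp [hvS, disjoint_left.mp hSP hvS]; omega
    by_cases hvP : v ∈ P
    · simp [hvS, hvP]; have := hP v hvP; omega
    · simp [hvS, hvP]; exact hrest v hvS hvP
  refine (sum_le_sum fun v _ => hpt v).trans_eq ?_
  simp only [sum_add_distrib, sum_ite_mem, univ_inter, sum_const, card_univ, smul_eq_mul]

theorem card_le_of_sum_degree {S P : Finset V} {θ : ℕ} (hk : 3 ≤ k) (hSP : Disjoint S P)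
    (hSk : S.card + 3 ≤ k) (hP : ∀ v ∈ P, G.degree v < θ)
    (hrest : ∀ v ∉ S, v ∉ P → G.degree v + 2 ≤ k)
    (hsum : (4 * k - 9) * Fintype.card V ≤ 2 * ∑ v, G.degree v) :
    Fintype.card V ≤ 2 * (P.card * θ) := by
  have h := sum_degree_le (d := k - 2) hSP hP fun v hS hP => by have := hrest v hS hP; omega
  obtain ⟨k, rfl⟩ : ∃ k', k = k' + 3 := ⟨k - 3, by omega⟩
  have hS : S.card * Fintype.card V ≤ k * Fintype.card V := Nat.mul_le_mul_right _ (by omega)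
  rw [show 4 * (k + 3) - 9 = 4 * k + 3 by omega] at hsum
  rw [show k + 3 - 2 = k + 1 by omega] at h
  nlinarith

theorem potentiallyHasClique_of_card_hubs_eq {S : Finset V} {θ : ℕ} {u₁ u₂ : V}
    (hS : ∀ s ∈ S, θ + 2 * k * k + 2 * k < G.degree s) (hsmall : ∀ v ∉ S, G.degree v < θ)
    (hSk : S.card + 2 = k) (hu₁ : u₁ ∉ S) (hu₂ : u₂ ∉ S) (hne : u₁ ≠ u₂)
    (hd₁ : k ≤ G.degree u₁ + 1) (hd₂ : k ≤ G.degree u₂ + 1) : PotentiallyHasClique k G := by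
  obtain ⟨G', x, y, hG', hxy, hx, hy, hdx, hdy⟩ :=
    exists_adj_of_degree (G := G) (d := k - 1) hu₁ hu₂ hne (by omega) (by omega) (by omega)
  refine potentiallyHasClique_of_hubs hG' (Y := {x, y}) ?_ ?_ ?_ ?_ hS hsmall
  · rw [coe_pair]; exact isClique_pair.mpr fun _ => hxy
  · simp [hx, hy]
  · rw [card_pair hxy.ne]; omega
  · simp only [mem_insert, mem_singleton, forall_eq_or_imp, forall_eq]; omega

theorem potentiallyHasClique_of_card_hubs_le {S P : Finset V} {θ : ℕ} (hk : 3 ≤ k)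
    (hn : (3 * k ^ 3 + 1) ^ 5 ≤ Fintype.card V) (hθ : 3 * k * k ≤ θ) (hθk : θ ≤ 3 * k ^ 3)
    (hS : ∀ s ∈ S, θ + 2 * k * k + 2 * k < G.degree s) (hsmall : ∀ v ∉ S, G.degree v < θ)
    (hSk : S.card + 3 ≤ k) (hSP : Disjoint S P) (hPdeg : ∀ v ∈ P, k ≤ G.degree v + 1)
    (hrest : ∀ v ∉ S, v ∉ P → G.degree v + 2 ≤ k)
    (hsum : (4 * k - 9) * Fintype.card V ≤ 2 * ∑ v, G.degree v) : PotentiallyHasClique k G := by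
  have hnP := card_le_of_sum_degree hk hSP hSk
    (fun v hv => hsmall v (disjoint_right.mp hSP hv)) hrest hsum
  have hPcard : k * (θ + 1) ^ 3 ≤ P.card := by
    -- otherwise `n ≤ 2 |P| θ < 2kθ (θ + 1)³ ≤ (θ + 1)⁵ ≤ n`
    by_contra h
    have h₁ : 2 * (P.card * θ) < 2 * k * θ * (θ + 1) ^ 3 := by
      have : 0 < θ := by nlinarith
      nlinarith
    have h₂ : 2 * k * θ ≤ (θ + 1) ^ 2 := by nlinarith
    have h₃ : (θ + 1) ^ 5 ≤ (3 * k ^ 3 + 1) ^ 5 := Nat.pow_le_pow_left (by omega) 5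
    have h₄ : 2 * k * θ * (θ + 1) ^ 3 ≤ (θ + 1) ^ 5 := by
      calc 2 * k * θ * (θ + 1) ^ 3 ≤ (θ + 1) ^ 2 * (θ + 1) ^ 3 := Nat.mul_le_mul_right _ h₂
        _ = (θ + 1) ^ 5 := by ring
    omega
  obtain ⟨Y, hYP, hY, hsep⟩ := exists_separated_subset (G := G) hsmall (k - S.card) P
    hSP.symm ((Nat.mul_le_mul_right _ (Nat.sub_le k S.card)).trans hPcard)
  obtain ⟨G', hG', hY'⟩ := exists_rewiring_isClique_of_separated hsep
    fun y hy => by have := hPdeg y (hYP hy); omega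
  exact potentiallyHasClique_of_hubs (hG'.mono (Set.empty_subset _)) hY'
    (disjoint_of_subset_right hYP hSP) (by omega) (fun y hy => hPdeg y (hYP hy)) hS hsmall

theorem exists_degree_gap (hk : 3 ≤ k) (h0 : #{v | 3 * k * k ≤ G.degree v} < k) :
    ∃ (S : Finset V) (θ : ℕ), S.card < k ∧ 3 * k * k ≤ θ ∧ θ ≤ 3 * k ^ 3 ∧
      (∀ s ∈ S, θ + 2 * k * k + 2 * k < G.degree s) ∧ ∀ v ∉ S, G.degree v < θ := by
  -- consecutive thresholds differ by `3k² > 2k² + 2k`, the margin needed by the hubs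
  set hubs : ℕ → Finset V := fun j => {v | 3 * k * k * (j + 1) ≤ G.degree v}
  have hanti : ∀ j, hubs (j + 1) ⊆ hubs j := fun j v hv => by
    simp only [hubs, mem_filter, mem_univ, true_and] at hv ⊢; nlinarith
  have h0' : (hubs 0).card < k := by simpa [hubs] using h0
  obtain ⟨j, hj, hgap⟩ := exists_eq_of_card_lt hanti h0'
  refine ⟨hubs (j + 1), 3 * k * k * (j + 1), ?_, Nat.le_mul_of_pos_right _ j.succ_pos,
    (Nat.mul_le_mul_left _ hj).trans_eq (by ring), fun s hs => ?_, fun v hv => ?_⟩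
  · have : hubs (j + 1) ⊆ hubs 0 := fun v hv => by
      simp only [hubs, mem_filter, mem_univ, true_and] at hv ⊢; nlinarith
    exact (card_le_card this).trans_lt h0'
  · have := (mem_filter.mp hs).2; nlinarith
  · rw [hgap] at hv; simpa [hubs] using hv

theorem potentiallyHasClique_of_sum_degree (hk : 3 ≤ k)
    (hn : (3 * k ^ 3 + 1) ^ 5 ≤ Fintype.card V) (hrich : k ≤ #{v | k ≤ G.degree v + 1})
    (hsum : (4 * k - 9) * Fintype.card V ≤ 2 * ∑ v, G.degree v) : PotentiallyHasClique k G := by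
  by_cases h0 : k ≤ #{v | 3 * k * k ≤ G.degree v}
  · by_contra hG
    obtain ⟨B, hB, hBk⟩ := exists_subset_card_eq h0
    obtain ⟨G', hG', hB'⟩ := exists_rewiring_isClique_of_degree hG subset_rfl hBk.le fun v hv => by
      have := (mem_filter.mp (hB hv)).2; nlinarith
    exact hG (hG'.potentiallyHasClique (potentiallyHasClique_of_isClique hB' hBk.ge))
  obtain ⟨S, θ, hSk, hθ, hθk, hS, hsmall⟩ := exists_degree_gap hk (not_le.mp h0)
  set R := ({v | k ≤ G.degree v + 1} : Finset V) \ S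
  have hR : k ≤ R.card + S.card := hrich.trans card_le_card_sdiff_add_card
  have hRdeg : ∀ v ∈ R, k ≤ G.degree v + 1 := fun v hv => (mem_filter.mp (mem_sdiff.mp hv).1).2
  rcases (by omega : S.card + 1 = k ∨ S.card + 2 = k ∨ S.card + 3 ≤ k) with h | h | h
  · obtain ⟨u, hu⟩ : R.Nonempty := card_pos.mp (by omega)
    exact potentiallyHasClique_of_hubs (Rewiring.refl _ G) (Y := {u}) (by simp)
      (disjoint_singleton_right.mpr (mem_sdiff.mp hu).2) (by simp [h])
      (by simpa using hRdeg u hu) hS hsmall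
  · obtain ⟨u₁, hu₁, u₂, hu₂, hne⟩ := one_lt_card.mp (by omega : 1 < R.card)
    exact potentiallyHasClique_of_card_hubs_eq hS hsmall h (mem_sdiff.mp hu₁).2
      (mem_sdiff.mp hu₂).2 hne (hRdeg u₁ hu₁) (hRdeg u₂ hu₂)
  · refine potentiallyHasClique_of_card_hubs_le hk hn hθ hθk hS hsmall h disjoint_sdiff hRdeg
      (fun v hvS hvR => ?_) hsum
    have : ¬ k ≤ G.degree v + 1 := fun hv => hvR (mem_sdiff.mpr ⟨by simpa using hv, hvS⟩)
    omega

end Core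

section DegreeSequences

variable {k : ℕ}

theorem containsSub_top_of_not_cliqueFree {G : SimpleGraph V} (h : ¬ G.CliqueFree k) :
    ContainsSub (⊤ : SimpleGraph (Fin k)) G :=
  let f := topEmbeddingOfNotCliqueFree h
  ⟨f, f.injective, fun _ _ hab => f.map_adj_iff.mpr hab⟩

variable [Fintype V]

theorem gdeg_eq_degree (G : SimpleGraph V) (v : V) : gdeg G v = G.degree v := by
  rw [gdeg, ← card_neighborFinset_eq_degree, neighborFinset_def, ← Set.ncard_eq_toFinset_card']
  rfl

theorem degMultiset_eq_map_degree (G : SimpleGraph V) :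
    degMultiset G = univ.val.map fun v => G.degree v := by
  rw [degMultiset, funext (gdeg_eq_degree G)]

theorem Rewiring.degMultiset_eq {X : Set V} {G G' : SimpleGraph V} (h : Rewiring X G G') :
    degMultiset G' = degMultiset G := by
  simp only [degMultiset_eq_map_degree, h.degree_eq]

theorem sum_degMultiset (G : SimpleGraph V) : (degMultiset G).sum = ∑ v, G.degree v := by
  rw [degMultiset_eq_map_degree]; rfl

theorem countP_degMultiset (G : SimpleGraph V) (p : ℕ → Prop) [DecidablePred p] :
    (degMultiset G).countP p = #{v | p (G.degree v)} := by
  rw [degMultiset_eq_map_degree, Multiset.countP_map]; rfl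

theorem coe_degList (G : SimpleGraph V) : (degList G : Multiset ℕ) = degMultiset G := by
  rw [degList, Multiset.coe_reverse, Multiset.sort_eq]

theorem length_degList (G : SimpleGraph V) : (degList G).length = Fintype.card V := by
  rw [← Multiset.coe_card, coe_degList, degMultiset, Multiset.card_map, card_val, card_univ]

theorem pairwise_degList (G : SimpleGraph V) : (degList G).Pairwise (· ≥ ·) :=
  List.pairwise_reverse.mpr (Multiset.pairwise_sort _ _)

theorem potentiallyGraphic_top_of_potentiallyHasClique {π : List ℕ}
    {G : SimpleGraph (Fin π.length)} (hG : degMultiset G = π) (h : PotentiallyHasClique k G) :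
    PotentiallyGraphic (⊤ : SimpleGraph (Fin k)) π :=
  let ⟨G', hG', hclique⟩ := h
  ⟨G', hG'.degMultiset_eq.trans hG, containsSub_top_of_not_cliqueFree hclique⟩

/-- The vertices of a `k`-clique have degree at least `k - 1`. -/
theorem not_potentiallyGraphic_top {π : List ℕ} (h : π.countP (fun d => k ≤ d + 1) < k) :
    ¬ PotentiallyGraphic (⊤ : SimpleGraph (Fin k)) π := by
  rintro ⟨G, hG, f, hf, hadj⟩
  have hdeg : ∀ i, k ≤ G.degree (f i) + 1 := by
    intro i
    have hsub : (univ.image f).erase (f i) ⊆ G.neighborFinset (f i) := by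
      intro w hw
      obtain ⟨hne, hw⟩ := mem_erase.mp hw
      obtain ⟨j, -, rfl⟩ := mem_image.mp hw
      exact (G.mem_neighborFinset _ _).mpr (hadj ((top_adj _ _).mpr fun hij => hne (hij ▸ rfl)))
    have := card_le_card hsub
    rw [card_erase_of_mem (mem_image_of_mem f (mem_univ i)), card_image_of_injective _ hf,
      card_univ, Fintype.card_fin, card_neighborFinset_eq_degree] at this
    omega
  have hcount : k ≤ #{v | k ≤ G.degree v + 1} := by
    calc k = (univ.image f).card := by rw [card_image_of_injective _ hf, card_univ, Fintype.card_fin]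
      _ ≤ _ := card_le_card fun v hv => by
        obtain ⟨i, -, rfl⟩ := mem_image.mp hv
        simpa using hdeg i
  have := countP_degMultiset G (fun d => k ≤ d + 1)
  rw [hG, Multiset.coe_countP] at this
  omega

theorem le_countP_of_degreeSufficient {π : List ℕ}
    (h : DegreeSufficient (⊤ : SimpleGraph (Fin k)) π) : k ≤ π.countP (fun d => k ≤ d + 1) := by
  have htop : ∀ d ∈ degList (⊤ : SimpleGraph (Fin k)), d = k - 1 := by
    intro d hd
    rw [← Multiset.mem_coe, coe_degList, degMultiset_eq_map_degree] at hd
    obtain ⟨v, -, rfl⟩ := Multiset.mem_map.mp hd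
    rw [← card_neighborFinset_eq_degree]
    convert_to (univ.erase v).card = k - 1
    · exact congrArg card (Finset.ext fun w => by simp [eq_comm])
    · rw [card_erase_of_mem (mem_univ v), card_univ, Fintype.card_fin]
  have hprefix : ∀ d ∈ π.take k, k ≤ d + 1 := by
    intro d hd
    obtain ⟨i, hi, rfl⟩ := List.mem_iff_getElem.mp hd
    rw [List.length_take] at hi
    have hik : i < k := lt_of_lt_of_le hi (min_le_left _ _)
    have hlen : i < (degList (⊤ : SimpleGraph (Fin k))).length := by
      rwa [length_degList, Fintype.card_fin]
    have := h.2 i (by rwa [Fintype.card_fin])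
    rw [List.getD_eq_getElem _ _ hlen, htop _ (List.getElem_mem hlen),
      List.getD_eq_getElem _ _ (lt_of_lt_of_le hi (min_le_right _ _))] at this
    rw [List.getElem_take]
    omega
  have hk : (π.take k).length = k := by
    rw [List.length_take, min_eq_left (by simpa using h.1)]
  calc k = (π.take k).countP (fun d => k ≤ d + 1) := by
        rw [List.countP_eq_length.mpr (by simpa using hprefix), hk]
    _ ≤ π.countP (fun d => k ≤ d + 1) := (List.take_sublist k π).countP_le

end DegreeSequences

section Extremal

variable {k n : ℕ}

/-- `K_{k-2}` on the first `k - 2` vertices, joined to an independent set on the others. -/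
def extremalGraph (k n : ℕ) : SimpleGraph (Fin n) :=
  SimpleGraph.fromRel fun x _ => x.val < k - 2

theorem degree_extremalGraph (hkn : k - 2 ≤ n) (v : Fin n) :
    (extremalGraph k n).degree v = if v.val < k - 2 then n - 1 else k - 2 := by
  rw [← card_neighborFinset_eq_degree]
  split_ifs with hv
  · convert_to (univ.erase v).card = n - 1
    · exact congrArg card (Finset.ext fun w => by
        rw [mem_neighborFinset]; simp [extremalGraph, hv, eq_comm])
    · simp
  · convert_to #{w : Fin n | w.val < k - 2} = k - 2
    · refine congrArg card (Finset.ext fun w => ?_)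
      rw [mem_neighborFinset]
      simp only [extremalGraph, fromRel_adj, hv, false_or, mem_filter, mem_univ, true_and,
        and_iff_right_iff_imp]
      rintro hw rfl
      exact hv hw
    · rw [Fin.card_filter_val_lt, min_eq_right hkn]

theorem sum_degree_extremalGraph (hkn : k - 2 ≤ n) :
    ∑ v, (extremalGraph k n).degree v = (k - 2) * (n - 1) + (n - (k - 2)) * (k - 2) := by
  simp only [degree_extremalGraph hkn, sum_ite, sum_const, smul_eq_mul, Fin.card_filter_val_lt,
    min_eq_right hkn]
  rw [filter_not, card_sdiff_of_subset (filter_subset _ _), Fin.card_filter_val_lt,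
    min_eq_right hkn, card_univ, Fintype.card_fin]

theorem card_filter_extremalGraph (hk : 3 ≤ k) (hkn : k ≤ n) :
    #{v | k ≤ (extremalGraph k n).degree v + 1} = k - 2 := by
  rw [← min_eq_right (by omega : k - 2 ≤ n), ← Fin.card_filter_val_lt]
  congr 1
  ext v
  simp only [mem_filter, mem_univ, true_and, degree_extremalGraph (by omega : k - 2 ≤ n)]
  split_ifs with hv <;> omega

theorem lt_potentialNumber_top (hk : 3 ≤ k) (hkn : k ≤ n) :
    (k - 2) * (n - 1) + (n - (k - 2)) * (k - 2) < potentialNumber (⊤ : SimpleGraph (Fin k)) n := by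
  rw [← sum_degree_extremalGraph (by omega)]
  set π := degList (extremalGraph k n)
  have hlen : π.length = n := by rw [length_degList, Fintype.card_fin]
  have hsum : π.sum = ∑ v, (extremalGraph k n).degree v := by
    rw [← Multiset.sum_coe, coe_degList, sum_degMultiset]
  refine Nat.lt_of_succ_le (le_csInf ⟨2 * (n * n + 1), even_two_mul _,
    fun σ hσ _ ⟨G, hG⟩ hle => absurd hle (not_le.mpr ?_)⟩ ?_)
  · have : σ.sum ≤ n * n := by
      rw [← Multiset.sum_coe, ← hG, sum_degMultiset]
      calc ∑ v, G.degree v ≤ ∑ _v : Fin σ.length, n :=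
            sum_le_sum fun v _ => (G.degree_lt_card_verts v).le.trans (by simp [hσ])
        _ = n * n := by simp [hσ]
    omega
  · rintro s ⟨-, hs⟩
    by_contra hlt
    refine not_potentiallyGraphic_top ?_ (hs π hlen (pairwise_degList _)
      ⟨extremalGraph k π.length, by rw [hlen]; exact (coe_degList _).symm⟩ (by omega))
    rw [← Multiset.coe_countP, coe_degList, countP_degMultiset, card_filter_extremalGraph hk hkn]
    omega

end Extremal

theorem four_mul_sub_nine_mul_le {k n s P : ℕ} (hk : 3 ≤ k) (hn : 4 * k * k ≤ n)
    (hP : (k - 2) * (n - 1) + (n - (k - 2)) * (k - 2) < P) (hs : 4 * P ≤ 4 * s + n) :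
    (4 * k - 9) * n ≤ 2 * s := by
  obtain ⟨c, rfl⟩ : ∃ c, k = c + 3 := ⟨k - 3, by omega⟩
  have hcn : c + 3 ≤ n := by nlinarith
  obtain ⟨m, rfl⟩ : ∃ m, n = m + c + 3 := ⟨n - c - 3, by omega⟩
  rw [show c + 3 - 2 = c + 1 by omega, show m + c + 3 - 1 = m + c + 2 by omega,
    show m + c + 3 - (c + 1) = m + 2 by omega] at hP
  rw [show 4 * (c + 3) - 9 = 4 * c + 3 by omega]
  nlinarith

theorem potentiallyGraphic_top_of_sum {π : List ℕ} (hk : 3 ≤ k)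
    (hn : (3 * k ^ 3 + 1) ^ 5 ≤ π.length) (hπ : IsGraphic π)
    (hsuff : DegreeSufficient (⊤ : SimpleGraph (Fin k)) π)
    (hsum : (4 * k - 9) * π.length ≤ 2 * π.sum) : PotentiallyGraphic (⊤ : SimpleGraph (Fin k)) π := by
  obtain ⟨G, hG⟩ := hπ
  have hcount := countP_degMultiset G (fun d => k ≤ d + 1)
  rw [hG, Multiset.coe_countP] at hcount
  have hsumG := sum_degMultiset G
  rw [hG, Multiset.sum_coe] at hsumG
  refine potentiallyGraphic_top_of_potentiallyHasClique hG
    (potentiallyHasClique_of_sum_degree hk (by simpa using hn) ?_ (by simpa [← hsumG] using hsum))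
  exact hcount ▸ le_countP_of_degreeSufficient hsuff

end PotentialClique

/-- **Theorem.** For every `k ≥ 3`, the complete graph `K_k` is weakly σ-stable. -/
theorem cliqueWeaklyStable (k : ℕ) (hk : 3 ≤ k) :
    WeaklySigmaStable (⊤ : SimpleGraph (Fin k)) := by
  intro _ _
  refine ⟨1 / 4, by norm_num, (3 * k ^ 3 + 1) ^ 5,
    fun n hn π hlen _ hπ hsuff hnot hsum => absurd ?_ hnot⟩
  have hkn : 4 * k * k ≤ n := by
    nlinarith [Nat.le_self_pow (by norm_num : 5 ≠ 0) (3 * k ^ 3 + 1)]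
  have hP := PotentialClique.lt_potentialNumber_top hk (by nlinarith : k ≤ n)
  refine PotentialClique.potentiallyGraphic_top_of_sum hk (hlen ▸ hn) hπ hsuff ?_
  rw [hlen]
  refine PotentialClique.four_mul_sub_nine_mul_le hk hkn hP ?_
  exact_mod_cast (by linarith : (4 * potentialNumber (⊤ : SimpleGraph (Fin k)) n : ℝ) ≤
    4 * π.sum + n)
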